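/- arXiv:math/9901026 — 2 statements merged into one kernel-verified Lean document; each statement's English description precedes it below -/
import Mathlib

section
/- For all 1 ≤ i,j ≤ n, k ∈ ℤ, the following matrix identities hold in M_{n+1}(R): K_i · x_j⁺(k) · K_i^{−1} = q^{(α_i|α_j)} · x_j⁺(k) and K_i · x_j⁻(k) · K_i^{−1} = q^{−(α_i|α_j)} · x_j⁻(k). -/
noncomputable section

open LaurentPolynomial

/-- The base field `F = ℚ(q)`. -/
abbrev F : Type := RatFunc ℚ

/-- The Laurent polynomial ring `R = F[z, z⁻¹]`. -/
abbrev R : Type := LaurentPolynomial F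

/-- The generator `q` of `ℚ(q)`. -/
def q : F := RatFunc.X

/-- The quantum integer `[m] = (q^m − q^{−m})/(q − q^{−1})`. -/
def qint (m : ℤ) : F := (q ^ m - q ^ (-m)) / (q - q⁻¹)

/-- The A_n inner product `(α_i|α_j)` on simple roots (1-based indices). -/
def ip (i j : ℕ) : ℤ := if i = j then 2 else if i + 1 = j ∨ j + 1 = i then -1 else 0

/-- The matrix unit `E_{ab} ∈ M_N(R)`, with 1-based labels `a b`. -/
def E (N a b : ℕ) : Matrix (Fin N) (Fin N) R :=
  Matrix.of fun r s => if (r : ℕ) + 1 = a ∧ (s : ℕ) + 1 = b then (1 : R) else 0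

/-- The element `(q^c z)^k ∈ R`. -/
def zq (c k : ℤ) : R := C (q ^ (c * k)) * T k

/-- `x_j⁺(k) = (q^j z)^k E_{j,j+1}` in `M_{n+1}(R)`. -/
def xp (n j : ℕ) (k : ℤ) : Matrix (Fin (n+1)) (Fin (n+1)) R :=
  zq j k • E (n+1) j (j+1)

/-- `x_j⁻(k) = (q^j z)^k E_{j+1,j}` in `M_{n+1}(R)`. -/
def xm (n j : ℕ) (k : ℤ) : Matrix (Fin (n+1)) (Fin (n+1)) R :=
  zq j k • E (n+1) (j+1) j

/-- `a_j(l) = ([l]/l)(q^j z)^l (q^{−l}E_{j,j} − q^l E_{j+1,j+1})` in `M_{n+1}(R)`. -/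
def aop (n j : ℕ) (l : ℤ) : Matrix (Fin (n+1)) (Fin (n+1)) R :=
  (C (qint l / (l : F)) * zq j l) •
    (C (q ^ (-l)) • E (n+1) j j - C (q ^ l) • E (n+1) (j+1) (j+1))

/-- `K_j = Σ_r q^{δ_{r,j} − δ_{r,j+1}} E_{r,r}`, an invertible diagonal matrix. -/
def K (n j : ℕ) : Matrix (Fin (n+1)) (Fin (n+1)) R :=
  Matrix.diagonal fun r =>
    C (q ^ (((if (r : ℕ) + 1 = j then 1 else 0) -
             (if (r : ℕ) + 1 = j + 1 then 1 else 0) : ℤ)))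


lemma q_ne : q ≠ 0 := RatFunc.X_ne_zero

/-- diagonal exponent of `K`. -/
def dK (i r : ℕ) : ℤ := (if r + 1 = i then 1 else 0) - (if r + 1 = i + 1 then 1 else 0)

lemma K_eq (n i : ℕ) :
    K n i = Matrix.diagonal fun r : Fin (n+1) => C (q ^ dK i (r : ℕ)) := rfl

lemma K_inv (n i : ℕ) :
    (K n i)⁻¹ = Matrix.diagonal fun r : Fin (n+1) => C (q ^ (-(dK i (r : ℕ)))) := by
  apply Matrix.inv_eq_right_inv
  rw [K_eq, Matrix.diagonal_mul_diagonal]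
  have h : (fun r : Fin (n+1) => C (q ^ dK i (r:ℕ)) * C (q ^ (-(dK i (r:ℕ))))) =
      fun _ => (1 : R) := by
    funext r
    rw [← map_mul, ← zpow_add₀ q_ne, add_neg_cancel, zpow_zero, map_one]
  rw [h, Matrix.diagonal_one]

lemma conj_E (n i a b : ℕ) (c : ℤ)
    (h : ∀ r s : Fin (n+1), (r : ℕ) + 1 = a → (s : ℕ) + 1 = b →
      dK i (r : ℕ) - dK i (s : ℕ) = c) :
    K n i * E (n+1) a b * (K n i)⁻¹ = C (q ^ c) • E (n+1) a b := by
  rw [K_inv, K_eq]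
  ext r s
  rw [Matrix.mul_diagonal, Matrix.diagonal_mul, Matrix.smul_apply]
  by_cases hc : (r : ℕ) + 1 = a ∧ (s : ℕ) + 1 = b
  · have := h r s hc.1 hc.2
    simp only [E, Matrix.of_apply, if_pos hc, mul_one, smul_eq_mul, ← map_mul,
      ← zpow_add₀ q_ne]
    rw [show dK i (r:ℕ) + -(dK i (s:ℕ)) = c by omega]
  · simp [E, Matrix.of_apply, if_neg hc]

lemma conj_smul (n i a b : ℕ) (c : ℤ) (w : R)
    (h : ∀ r s : Fin (n+1), (r : ℕ) + 1 = a → (s : ℕ) + 1 = b →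
      dK i (r : ℕ) - dK i (s : ℕ) = c) :
    K n i * (w • E (n+1) a b) * (K n i)⁻¹ = C (q ^ c) • (w • E (n+1) a b) := by
  rw [Matrix.mul_smul, Matrix.smul_mul, conj_E n i a b c h, smul_comm]

/-- `K_i x_j⁺(k) K_i⁻¹ = q^{(α_i|α_j)} x_j⁺(k)` and
`K_i x_j⁻(k) K_i⁻¹ = q^{−(α_i|α_j)} x_j⁻(k)` in `M_{n+1}(R)`. -/
theorem K_conj (n : ℕ) (hn : 1 ≤ n) (i j : ℕ) (hi1 : 1 ≤ i) (hin : i ≤ n)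
    (hj1 : 1 ≤ j) (hjn : j ≤ n) (k : ℤ) :
    K n i * xp n j k * (K n i)⁻¹ = C (q ^ ip i j) • xp n j k ∧
    K n i * xm n j k * (K n i)⁻¹ = C (q ^ (-ip i j)) • xm n j k := by
  constructor
  · exact conj_smul n i j (j+1) (ip i j) (zq j k) (by
      intro r s hr hs
      simp only [dK, ip]
      split_ifs <;> omega)
  · exact conj_smul n i (j+1) j (-(ip i j)) (zq j k) (by
      intro r s hr hs
      simp only [dK, ip]
      split_ifs <;> omega)
end
end

section
/- For all 1 ≤ i,j ≤ n, k ∈ ℤ, and nonzero l ∈ ℤ, the commutator identity [a_i(l), x_j⁻(k)] = −([(α_i|α_j)·l]/l) · x_j⁻(k+l) holds in M_{n+1}(R). -/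
noncomputable section

open LaurentPolynomial

lemma qpow_add (a b : ℤ) : q ^ (a + b) = q ^ a * q ^ b := zpow_add₀ q_ne a b

lemma qint_neg (l : ℤ) : qint (-l) = - qint l := by unfold qint; rw [neg_neg]; ring

lemma qint_zero : qint 0 = 0 := by simp [qint]

lemma qint_two (l : ℤ) : qint (2 * l) = qint l * (q ^ l + q ^ (-l)) := by
  unfold qint
  rw [div_mul_eq_mul_div]
  congr 1
  have h2 : -((2:ℤ) * l) = -l + -l := by ring
  rw [h2, qpow_add, show (2:ℤ) * l = l + l from by ring, qpow_add]
  ring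

lemma zq_mul (c k l : ℤ) : zq c l * zq c k = zq c (k + l) := by
  simp only [zq]
  rw [mul_mul_mul_comm, ← map_mul, ← T_add, ← qpow_add]
  congr 2 <;> ring

lemma zq_shift (c l : ℤ) : C (q ^ (-l)) * zq (c + 1) l = zq c l := by
  simp only [zq]
  rw [← mul_assoc, ← map_mul, ← qpow_add]
  congr 2; ring

lemma zq_shift' (c l : ℤ) : C (q ^ l) * zq c l = zq (c + 1) l := by
  simp only [zq]
  rw [← mul_assoc, ← map_mul, ← qpow_add]
  congr 2; ring

lemma E_mul (N a b c d : ℕ) (hb : 1 ≤ b) (hbN : b ≤ N) :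
    E N a b * E N c d = if b = c then E N a d else 0 := by
  ext r s
  simp only [Matrix.mul_apply, E, Matrix.of_apply, ite_mul, mul_ite, one_mul, zero_mul, mul_one,
    mul_zero]
  rw [Finset.sum_eq_single (⟨b - 1, by omega⟩ : Fin N)]
  · by_cases hbc : b = c <;>
      simp only [hbc, if_pos, if_true, if_false, E, Matrix.of_apply, eq_self_iff_true] <;>
      split_ifs <;> simp_all
  · intro t _ ht
    split_ifs with h1 h2 <;> simp_all
    exact ht (by ext; simp; omega)
  · simp

lemma smul_sub_mul' {m : ℕ} (s u v w : R) (A B Cm : Matrix (Fin m) (Fin m) R) :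
    (s • (u • A - v • B)) * (w • Cm) = (s*u*w) • (A*Cm) - (s*v*w) • (B*Cm) := by
  simp only [smul_sub, sub_mul, Matrix.smul_mul, Matrix.mul_smul, smul_smul]
  congr 1 <;> ring_nf

lemma mul_smul_sub' {m : ℕ} (s u v w : R) (A B Cm : Matrix (Fin m) (Fin m) R) :
    (w • Cm) * (s • (u • A - v • B)) = (s*u*w) • (Cm*A) - (s*v*w) • (Cm*B) := by
  simp only [smul_sub, mul_sub, Matrix.smul_mul, Matrix.mul_smul, smul_smul]

/-- `[a_i(l), x_j⁻(k)] = −([(α_i|α_j)l]/l) x_j⁻(k+l)` in `M_{n+1}(R)`. -/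
theorem a_xm_comm (n : ℕ) (hn : 1 ≤ n) (i j : ℕ) (hi1 : 1 ≤ i) (hin : i ≤ n)
    (hj1 : 1 ≤ j) (hjn : j ≤ n) (k l : ℤ) (hl : l ≠ 0) :
    aop n i l * xm n j k - xm n j k * aop n i l =
      (-(C (qint (ip i j * l) / (l : F)))) • xm n j (k + l) := by
  set S : R := C (qint l / (l : F)) with hS
  rw [show aop n i l = (S * zq i l) • (C (q ^ (-l)) • E (n+1) i i - C (q ^ l) • E (n+1) (i+1) (i+1)) from rfl,
    show xm n j k = zq j k • E (n+1) (j+1) j from rfl,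
    smul_sub_mul', mul_smul_sub',
    E_mul _ _ _ _ _ hi1 (by omega), E_mul _ _ _ _ _ (by omega) (by omega),
    E_mul _ _ _ _ _ hj1 (by omega), E_mul _ _ _ _ _ hj1 (by omega)]
  rcases eq_or_ne i j with hij | hij
  · subst hij
    rw [if_neg (by omega), if_pos rfl, if_pos rfl, if_neg (by omega)]
    rw [ip, if_pos rfl, xm, smul_smul, smul_zero, smul_zero, zero_sub, sub_zero]
    rw [← neg_smul, sub_eq_add_neg, ← neg_smul, ← add_smul]
    congr 1
    have hF : qint l / (l:F) * q ^ l + qint l / (l:F) * q ^ (-l) = qint (2 * l) / (l:F) := by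
      rw [qint_two]; ring
    have hc : S * zq i l * C (q ^ l) * zq i k + S * zq i l * C (q ^ (-l)) * zq i k
        = C (qint (2 * l) / (l:F)) * zq i (k + l) := by
      calc S * zq i l * C (q ^ l) * zq i k + S * zq i l * C (q ^ (-l)) * zq i k
          = C (qint l / (l:F) * q ^ l + qint l / (l:F) * q ^ (-l)) * (zq i l * zq i k) := by
            rw [map_add, map_mul, map_mul, hS]; ring
        _ = C (qint (2 * l) / (l:F)) * zq i (k + l) := by rw [hF, zq_mul]
    linear_combination -hc
  rcases eq_or_ne i (j+1) with hij2 | hij2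
  · rw [if_pos hij2, if_neg (by omega), if_neg (by omega), if_neg (by omega)]
    rw [ip, if_neg hij, if_pos (Or.inr hij2.symm), xm, smul_smul, smul_zero, smul_zero,
      sub_zero, sub_zero, sub_zero]
    have hiz : (i : ℤ) = (j : ℤ) + 1 := by omega
    rw [show E (n+1) i j = E (n+1) (j+1) j from by rw [hij2]]
    congr 1
    have h1 : zq i l = zq ((j:ℤ)+1) l := by rw [hiz]
    have hc : S * zq i l * C (q ^ (-l)) * zq j k = S * zq j (k + l) := by
      rw [h1, show S * zq ((j:ℤ)+1) l * C (q ^ (-l)) * zq j k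
          = S * ((C (q ^ (-l)) * zq ((j:ℤ)+1) l) * zq j k) from by ring,
        zq_shift, zq_mul]
    rw [hc, hS, show (-1:ℤ)*l = -l from by ring, qint_neg, neg_div, map_neg, neg_neg]
  rcases eq_or_ne j (i+1) with hij3 | hij3
  · rw [if_neg (by omega), if_neg (by omega), if_neg (by omega), if_pos hij3]
    rw [ip, if_neg hij, if_pos (Or.inl hij3.symm), xm, smul_smul, smul_zero, smul_zero,
      sub_zero]
    rw [zero_sub, zero_sub, neg_neg]
    rw [show E (n+1) (j+1) (i+1) = E (n+1) (j+1) j from by rw [hij3]]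
    congr 1
    have hjz : (j : ℤ) = (i : ℤ) + 1 := by omega
    have hc : S * zq i l * C (q ^ l) * zq j k = S * zq j (k + l) := by
      rw [show S * zq i l * C (q ^ l) * zq j k
          = S * ((C (q ^ l) * zq i l) * zq j k) from by ring,
        zq_shift', ← hjz, zq_mul]
    rw [hc, hS, show (-1:ℤ)*l = -l from by ring, qint_neg, neg_div, map_neg, neg_neg]
  · rw [if_neg (by omega), if_neg (by omega), if_neg (by omega), if_neg (by omega)]
    rw [ip, if_neg hij, if_neg (by omega)]
    simp [qint_zero]
end
end
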